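/- arXiv:2302.08151 — 3 statements merged into one kernel-verified Lean document; each statement's English description precedes it below -/
import Mathlib

section
/- For any p1, q1 ∈ (0,1) and any ω ∈ (0,∞), there exists a unique bivariate Bernoulli distribution (p_{00}, p_{01}, p_{10}, p_{11}), with all entries positive and summing to 1, having marginals p_{10}+p_{11} = p1 and p_{01}+p_{11} = q1 and odds ratio (p_{00}p_{11})/(p_{10}p_{01}) = ω. -/
/-!
Once the marginals `p`, `q` are fixed, a distribution is determined by `t = p₁₁`, and all four
cells are positive exactly when `max 0 (p + q - 1) < t < min p q`. On that interval the odds ratio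
equation with cleared denominators, `p₀₀ p₁₁ - ω p₁₀ p₀₁ = 0`, has a left-hand side strictly
increasing in `t`, negative at the left endpoint and positive at the right one, so it has exactly
one root there by the intermediate value theorem.
-/

open Set

theorem StrictMonoOn.existsUnique_mem_Ioo_eq {α δ : Type*} [ConditionallyCompleteLinearOrder α]
    [TopologicalSpace α] [OrderTopology α] [DenselyOrdered α] [LinearOrder δ] [TopologicalSpace δ]
    [OrderClosedTopology δ] {f : α → δ} {a b : α} {c : δ} (hab : a ≤ b)
    (hmono : StrictMonoOn f (Icc a b)) (hf : ContinuousOn f (Icc a b)) (hc : c ∈ Ioo (f a) (f b)) :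
    ∃! x, x ∈ Ioo a b ∧ f x = c := by
  obtain ⟨x, hx, rfl⟩ := intermediate_value_Ioo hab hf hc
  exact ⟨x, ⟨hx, rfl⟩, fun y ⟨hy, hxy⟩ =>
    (hmono.mono Ioo_subset_Icc_self).injOn hy hx hxy⟩

namespace BivariateBernoulli

/-- The quadruple `(p₀₀, p₀₁, p₁₀, p₁₁)` with marginals `p`, `q` and `p₁₁ = t`. -/
def ofMarginals (p q t : ℝ) : ℝ × ℝ × ℝ × ℝ := (1 - p - q + t, q - t, p - t, t)

def HasMarginalsOddsRatio (p q ω : ℝ) (x : ℝ × ℝ × ℝ × ℝ) : Prop :=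
  0 < x.1 ∧ 0 < x.2.1 ∧ 0 < x.2.2.1 ∧ 0 < x.2.2.2 ∧
    x.1 + x.2.1 + x.2.2.1 + x.2.2.2 = 1 ∧ x.2.2.1 + x.2.2.2 = p ∧ x.2.1 + x.2.2.2 = q ∧
    x.1 * x.2.2.2 / (x.2.2.1 * x.2.1) = ω

/-- Cleared-denominator form of `odds ratio of ofMarginals p q t = ω`. -/
def oddsGap (p q ω t : ℝ) : ℝ := (1 - p - q + t) * t - ω * ((p - t) * (q - t))

theorem hasMarginalsOddsRatio_iff {p q ω : ℝ} {x : ℝ × ℝ × ℝ × ℝ} :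
    HasMarginalsOddsRatio p q ω x ↔
      ∃ t ∈ Ioo (max 0 (p + q - 1)) (min p q), oddsGap p q ω t = 0 ∧ x = ofMarginals p q t := by
  constructor
  · rintro ⟨ha, hb, hc, hd, hsum, hp, hq, hodds⟩
    obtain ⟨a, b, c, d⟩ := x
    dsimp only at *
    obtain rfl : c = p - d := by linarith
    obtain rfl : b = q - d := by linarith
    obtain rfl : a = 1 - p - q + d := by linarith
    rw [div_eq_iff (mul_pos hc hb).ne'] at hodds
    refine ⟨d, ⟨max_lt hd (by linarith), lt_min (by linarith) (by linarith)⟩, ?_, ?_⟩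
    · unfold oddsGap; linarith
    · rfl
  · rintro ⟨t, ⟨hL, hU⟩, hgap, rfl⟩
    simp only [HasMarginalsOddsRatio, ofMarginals]
    rw [max_lt_iff] at hL
    rw [lt_min_iff] at hU
    unfold oddsGap at hgap
    refine ⟨by linarith, by linarith, by linarith, hL.1, by ring, by ring, by ring, ?_⟩
    rw [div_eq_iff (mul_pos (by linarith) (by linarith)).ne']
    linarith

theorem oddsGap_strictMonoOn {p q ω : ℝ} (hω : 0 < ω) :
    StrictMonoOn (oddsGap p q ω) (Icc (max 0 (p + q - 1)) (min p q)) := by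
  rintro s ⟨hsL, -⟩ t ⟨-, htU⟩ hst
  rw [max_le_iff] at hsL
  rw [le_min_iff] at htU
  have : 0 < (t - s) * ((1 - p - q + s) + t + ω * (p - s) + ω * (q - t)) := by
    have := mul_pos hω (show 0 < p - s by linarith)
    have := mul_nonneg hω.le (show 0 ≤ q - t by linarith)
    exact mul_pos (by linarith) (by linarith)
  have key : oddsGap p q ω t - oddsGap p q ω s
      = (t - s) * ((1 - p - q + s) + t + ω * (p - s) + ω * (q - t)) := by
    unfold oddsGap; ring
  linarith

theorem oddsGap_max_neg {p q ω : ℝ} (hp : p ∈ Ioo 0 1) (hq : q ∈ Ioo 0 1) (hω : 0 < ω) :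
    oddsGap p q ω (max 0 (p + q - 1)) < 0 := by
  obtain ⟨hp0, hp1⟩ := hp
  obtain ⟨hq0, hq1⟩ := hq
  unfold oddsGap
  rcases le_total (p + q - 1) 0 with h | h
  · rw [max_eq_left h]
    nlinarith [mul_pos hω (mul_pos hp0 hq0)]
  · rw [max_eq_right h]
    nlinarith [mul_pos hω (mul_pos (sub_pos.2 hq1) (sub_pos.2 hp1))]

theorem oddsGap_min_pos {p q ω : ℝ} (hp : p ∈ Ioo 0 1) (hq : q ∈ Ioo 0 1) :
    0 < oddsGap p q ω (min p q) := by
  obtain ⟨hp0, hp1⟩ := hp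
  obtain ⟨hq0, hq1⟩ := hq
  unfold oddsGap
  rcases le_total p q with h | h
  · rw [min_eq_left h]; nlinarith
  · rw [min_eq_right h]; nlinarith

theorem existsUnique_oddsGap_eq_zero {p q ω : ℝ} (hp : p ∈ Ioo 0 1) (hq : q ∈ Ioo 0 1)
    (hω : 0 < ω) :
    ∃! t, t ∈ Ioo (max 0 (p + q - 1)) (min p q) ∧ oddsGap p q ω t = 0 := by
  refine (oddsGap_strictMonoOn hω).existsUnique_mem_Ioo_eq ?_ ?_
    ⟨oddsGap_max_neg hp hq hω, oddsGap_min_pos hp hq⟩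
  · exact max_le (le_min hp.1.le hq.1.le) (le_min (by linarith [hq.2]) (by linarith [hp.2]))
  · unfold oddsGap; fun_prop

end BivariateBernoulli

open BivariateBernoulli in
/-- The triple (X-marginal of 1, Y-marginal of 1, odds ratio) parametrizes
bivariate Bernoulli distributions bijectively over (0,1)×(0,1)×(0,∞):
for each such triple there is exactly one distribution `(p00, p01, p10, p11)`. -/
theorem bivariate_bernoulli_odds_ratio_parametrization
    (p1 q1 ω : ℝ) (hp1 : p1 ∈ Set.Ioo (0:ℝ) 1) (hq1 : q1 ∈ Set.Ioo (0:ℝ) 1)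
    (hω : 0 < ω) :
    ∃! p : ℝ × ℝ × ℝ × ℝ,
      0 < p.1 ∧ 0 < p.2.1 ∧ 0 < p.2.2.1 ∧ 0 < p.2.2.2 ∧
      p.1 + p.2.1 + p.2.2.1 + p.2.2.2 = 1 ∧
      p.2.2.1 + p.2.2.2 = p1 ∧
      p.2.1 + p.2.2.2 = q1 ∧
      p.1 * p.2.2.2 / (p.2.2.1 * p.2.1) = ω := by
  obtain ⟨t, ht, huniq⟩ := existsUnique_oddsGap_eq_zero hp1 hq1 hω
  refine ⟨ofMarginals p1 q1 t, hasMarginalsOddsRatio_iff.2 ⟨t, ht.1, ht.2, rfl⟩, fun x hx => ?_⟩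
  obtain ⟨s, hs, hgap, rfl⟩ := hasMarginalsOddsRatio_iff.1 hx
  rw [huniq s ⟨hs, hgap⟩]
end

section
/- Conversely, if two bivariate Bernoulli distributions with positive entries have equal odds ratios, then there exist positive reals a_0, a_1, b_0, b_1 such that p*_{xy} = p_{xy} · a_x · b_y for all x, y ∈ {0,1}. -/
/-!
The density ratio `r = q / p` has odds ratio `1`, i.e. `r 0 0 * r 1 1 = r 1 0 * r 0 1`.
On a `2 × 2` table this is the vanishing of the only `2 × 2` minor of `r`, so `r` has rank one:
`r x y = r x 0 * (r 0 y / r 0 0)`.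
-/

theorem eq_mul_div_of_minors_eq {α β K : Type*} [Field K] (r : α → β → K) (x₀ : α) (y₀ : β)
    (hr : r x₀ y₀ ≠ 0) (hminor : ∀ x y, r x y * r x₀ y₀ = r x y₀ * r x₀ y) (x : α) (y : β) :
    r x y = r x y₀ * (r x₀ y / r x₀ y₀) := by
  rw [mul_div_assoc', eq_div_iff hr, hminor]

theorem minor_eq_of_det_eq_fin_two {R : Type*} [CommRing R] (r : Fin 2 → Fin 2 → R)
    (hdet : r 0 0 * r 1 1 = r 1 0 * r 0 1) (x y : Fin 2) :
    r x y * r 0 0 = r x 0 * r 0 y := by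
  fin_cases x <;> fin_cases y <;> simp only [Fin.zero_eta, Fin.mk_one] <;>
    first | ring | linear_combination hdet

theorem ratio_det_eq_of_odds_ratio_eq {K : Type*} [Field K] (p q : Fin 2 → Fin 2 → K)
    (hp : ∀ x y, p x y ≠ 0) (hq : ∀ x y, q x y ≠ 0)
    (hodds : q 0 0 * q 1 1 / (q 1 0 * q 0 1) = p 0 0 * p 1 1 / (p 1 0 * p 0 1)) :
    q 0 0 / p 0 0 * (q 1 1 / p 1 1) = q 1 0 / p 1 0 * (q 0 1 / p 0 1) := by
  field_simp [hp 0 0, hp 0 1, hp 1 0, hp 1 1, hq 0 1, hq 1 0] at hodds ⊢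
  linear_combination hodds

theorem equal_odds_ratio_implies_product_form_general
    (p q : Fin 2 → Fin 2 → ℝ)
    (hp : ∀ x y, 0 < p x y) (hq : ∀ x y, 0 < q x y)
    (hodds : q 0 0 * q 1 1 / (q 1 0 * q 0 1) = p 0 0 * p 1 1 / (p 1 0 * p 0 1)) :
    ∃ a b : Fin 2 → ℝ, (∀ x, 0 < a x) ∧ (∀ y, 0 < b y) ∧
      ∀ x y, q x y = p x y * a x * b y := by
  set r : Fin 2 → Fin 2 → ℝ := fun x y ↦ q x y / p x y
  have hr : ∀ x y, 0 < r x y := fun x y ↦ div_pos (hq x y) (hp x y)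
  have hdet : r 0 0 * r 1 1 = r 1 0 * r 0 1 :=
    ratio_det_eq_of_odds_ratio_eq p q (fun x y ↦ (hp x y).ne') (fun x y ↦ (hq x y).ne') hodds
  refine ⟨fun x ↦ r x 0, fun y ↦ r 0 y / r 0 0, fun x ↦ hr x 0,
    fun y ↦ div_pos (hr 0 y) (hr 0 0), fun x y ↦ ?_⟩
  rw [mul_assoc, ← eq_mul_div_of_minors_eq r 0 0 (hr 0 0).ne'
    (minor_eq_of_det_eq_fin_two r hdet), mul_div_cancel₀ _ (hp x y).ne']

/-- If two bivariate Bernoulli distributions with positive entries have equal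
odds ratios, their densities differ by a product of marginal factors. -/
theorem equal_odds_ratio_implies_product_form
    (p q : Fin 2 → Fin 2 → ℝ)
    (hp : ∀ x y, 0 < p x y) (hq : ∀ x y, 0 < q x y)
    (hpsum : ∑ x, ∑ y, p x y = 1) (hqsum : ∑ x, ∑ y, q x y = 1)
    (hodds : q 0 0 * q 1 1 / (q 1 0 * q 0 1) = p 0 0 * p 1 1 / (p 1 0 * p 0 1)) :
    ∃ a b : Fin 2 → ℝ, (∀ x, 0 < a x) ∧ (∀ y, 0 < b y) ∧
      ∀ x y, q x y = p x y * a x * b y :=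
  equal_odds_ratio_implies_product_form_general p q hp hq hodds
end

section
/- Consider a 3×3 probability matrix supported on the off-diagonal entries (p_{xy} > 0 if x ≠ y, p_{xx} = 0). There exist positive reals q_0, q_1, q_2, r_0, r_1, r_2 with p_{xy} = q_x r_y for all x ≠ y (quasi-independence) if and only if p_{01} p_{12} p_{20} = p_{02} p_{10} p_{21}. -/
/-! Necessity: substituting `p x y = q x * r y` turns both cycle products into
`q 0 q 1 q 2 r 0 r 1 r 2`. Sufficiency: normalising `q 0 = 1` forces
`r 1 = p 0 1`, `r 2 = p 0 2`, `q 1 = p 1 2 / r 2`, `q 2 = p 2 1 / r 1` and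
`r 0 = p 1 0 / q 1`; of the six equations only `p 2 0 = q 2 * r 0` is then not
automatic, and it is exactly the cycle identity. -/

namespace OffDiagonal3

variable {K : Type*}

def rowFactor [Field K] (p : Fin 3 → Fin 3 → K) : Fin 3 → K :=
  ![1, p 1 2 / p 0 2, p 2 1 / p 0 1]

def colFactor [Field K] (p : Fin 3 → Fin 3 → K) : Fin 3 → K :=
  ![p 1 0 * p 0 2 / p 1 2, p 0 1, p 0 2]

theorem cycle_products_eq_of_eq_mul {M : Type*} [CommMonoid M] {p : Fin 3 → Fin 3 → M}
    {q r : Fin 3 → M} (h : ∀ x y, x ≠ y → p x y = q x * r y) :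
    p 0 1 * p 1 2 * p 2 0 = p 0 2 * p 1 0 * p 2 1 := by
  rw [h 0 1 (by decide), h 1 2 (by decide), h 2 0 (by decide),
    h 0 2 (by decide), h 1 0 (by decide), h 2 1 (by decide)]
  ac_rfl

theorem eq_rowFactor_mul_colFactor [Field K] {p : Fin 3 → Fin 3 → K}
    (h01 : p 0 1 ≠ 0) (h02 : p 0 2 ≠ 0) (h12 : p 1 2 ≠ 0)
    (hcycle : p 0 1 * p 1 2 * p 2 0 = p 0 2 * p 1 0 * p 2 1) :
    ∀ x y, x ≠ y → p x y = rowFactor p x * colFactor p y := by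
  intro x y hxy
  fin_cases x <;> fin_cases y <;>
    simp only [Fin.zero_eta, Fin.mk_one, Fin.reduceFinMk, Fin.isValue, ne_eq, not_true_eq_false,
      rowFactor, colFactor, Matrix.cons_val_zero, Matrix.cons_val_one, Matrix.cons_val, one_mul] at hxy ⊢
  · field_simp
  · field_simp
  · field_simp
    linear_combination hcycle
  · field_simp

section Positivity

variable [Field K] [LinearOrder K] [IsStrictOrderedRing K] {p : Fin 3 → Fin 3 → K}

theorem rowFactor_pos (hpos : ∀ x y, x ≠ y → 0 < p x y) (x : Fin 3) : 0 < rowFactor p x := by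
  fin_cases x
  · exact one_pos
  · exact div_pos (hpos 1 2 (by decide)) (hpos 0 2 (by decide))
  · exact div_pos (hpos 2 1 (by decide)) (hpos 0 1 (by decide))

theorem colFactor_pos (hpos : ∀ x y, x ≠ y → 0 < p x y) (y : Fin 3) : 0 < colFactor p y := by
  fin_cases y
  · exact div_pos (mul_pos (hpos 1 0 (by decide)) (hpos 0 2 (by decide))) (hpos 1 2 (by decide))
  · exact hpos 0 1 (by decide)
  · exact hpos 0 2 (by decide)

end Positivity

end OffDiagonal3

theorem quasi_independence_off_diagonal_3x3_general
    (p : Fin 3 → Fin 3 → ℝ)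
    (hpos : ∀ x y, x ≠ y → 0 < p x y) :
    (∃ q r : Fin 3 → ℝ, (∀ x, 0 < q x) ∧ (∀ y, 0 < r y) ∧
        ∀ x y, x ≠ y → p x y = q x * r y) ↔
      p 0 1 * p 1 2 * p 2 0 = p 0 2 * p 1 0 * p 2 1 := by
  constructor
  · rintro ⟨q, r, -, -, h⟩
    exact OffDiagonal3.cycle_products_eq_of_eq_mul h
  · intro hcycle
    have hne (x y : Fin 3) (hxy : x ≠ y) : p x y ≠ 0 := (hpos x y hxy).ne'
    exact ⟨_, _, OffDiagonal3.rowFactor_pos hpos, OffDiagonal3.colFactor_pos hpos,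
      OffDiagonal3.eq_rowFactor_mul_colFactor (hne 0 1 (by decide)) (hne 0 2 (by decide))
        (hne 1 2 (by decide)) hcycle⟩

/-- For a 3×3 probability matrix supported off the diagonal, quasi-independence
(`p_{xy} = q_x r_y` on the support) holds iff `p₀₁p₁₂p₂₀ = p₀₂p₁₀p₂₁`. -/
theorem quasi_independence_off_diagonal_3x3
    (p : Fin 3 → Fin 3 → ℝ)
    (hdiag : ∀ x, p x x = 0)
    (hpos : ∀ x y, x ≠ y → 0 < p x y)
    (hsum : ∑ x, ∑ y, p x y = 1) :
    (∃ q r : Fin 3 → ℝ, (∀ x, 0 < q x) ∧ (∀ y, 0 < r y) ∧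
        ∀ x y, x ≠ y → p x y = q x * r y) ↔
      p 0 1 * p 1 2 * p 2 0 = p 0 2 * p 1 0 * p 2 1 :=
  quasi_independence_off_diagonal_3x3_general p hpos
end
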